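/- arXiv:2101.04894 — 3 statements merged into one kernel-verified Lean document; each statement's English description precedes it below -/
import Mathlib

section
/- Let X be a T0 space such that ↓(K ∩ A) is closed in X for every closed KF-set A of X and every compact saturated subset K of X. Then the family 𝒟 = {cl(D) : D a directed subset of X} satisfies: (i) every closed KF-set of X belongs to 𝒟 (i.e. is the closure of a directed subset), and (ii) 𝒟 is closed under suprema in the lattice of closed sets of directed (under inclusion) subfamilies: for any family {cl(D_i)}_{i∈I} ⊆ 𝒟 that is directed under inclusion, cl(⋃_{i∈I} cl(D_i)) belongs to 𝒟; in fact ⋃_{i∈I} cl(D_i) is itself a directed subset of X. -/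
/-- The specialization order of a topological space: `x ≤ y` iff `x ∈ cl {y}`. -/
def SpecLE {X : Type*} [TopologicalSpace X] (x y : X) : Prop := x ∈ closure ({y} : Set X)

/-- A subset is directed (w.r.t. the specialization order) if it is nonempty and
every pair of its elements has an upper bound in it. -/
def DirectedSubset {X : Type*} [TopologicalSpace X] (D : Set X) : Prop :=
  D.Nonempty ∧ ∀ x ∈ D, ∀ y ∈ D, ∃ z ∈ D, SpecLE x z ∧ SpecLE y z

/-- `↓A` with respect to the specialization order. -/
def SpecLower {X : Type*} [TopologicalSpace X] (A : Set X) : Set X :=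
  {x | ∃ a ∈ A, SpecLE x a}

/-- Saturated = upper set in the specialization order. -/
def SatUpper {X : Type*} [TopologicalSpace X] (K : Set X) : Prop :=
  ∀ x ∈ K, ∀ y, SpecLE x y → y ∈ K

/-- A family of sets is filtered. -/
def FilteredFam {X : Type*} (𝒦 : Set (Set X)) : Prop :=
  ∀ K₁ ∈ 𝒦, ∀ K₂ ∈ 𝒦, ∃ K₃ ∈ 𝒦, K₃ ⊆ K₁ ∩ K₂

/-- `A` is a KF-set: there is a nonempty filtered family `𝒦` of compact saturated sets such
that `cl A` is a minimal closed set intersecting all members of `𝒦`. -/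
def IsKFSet {X : Type*} [TopologicalSpace X] (A : Set X) : Prop :=
  A.Nonempty ∧ ∃ 𝒦 : Set (Set X), 𝒦.Nonempty ∧ (∀ K ∈ 𝒦, IsCompact K ∧ SatUpper K) ∧
    FilteredFam 𝒦 ∧ (∀ K ∈ 𝒦, (closure A ∩ K).Nonempty) ∧
    (∀ C : Set X, IsClosed C → C ⊆ closure A → (∀ K ∈ 𝒦, (C ∩ K).Nonempty) → C = closure A)

/- ### Auxiliary lemmas -/

theorem specLE_refl' {X : Type*} [TopologicalSpace X] (x : X) : SpecLE x x :=
  subset_closure rfl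

theorem specLE_trans' {X : Type*} [TopologicalSpace X] {x y z : X}
    (hxy : SpecLE x y) (hyz : SpecLE y z) : SpecLE x z :=
  (closure_minimal (Set.singleton_subset_iff.mpr hyz) isClosed_closure) hxy

/-- Closed sets are lower sets for the specialization order. -/
theorem mem_closed_of_specLE {X : Type*} [TopologicalSpace X] {C : Set X}
    (hC : IsClosed C) {x y : X} (hy : y ∈ C) (hxy : SpecLE x y) : x ∈ C :=
  (closure_minimal (Set.singleton_subset_iff.mpr hy) hC) hxy

/-- `↑x` is compact. -/
theorem upSet_compact {X : Type*} [TopologicalSpace X] (x : X) :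
    IsCompact {y : X | SpecLE x y} := by
  apply isCompact_of_finite_subcover
  intro ι U hU hcov
  obtain ⟨i, hi⟩ := Set.mem_iUnion.mp (hcov (specLE_refl' x))
  refine ⟨{i}, fun y hy => Set.mem_iUnion₂.mpr ⟨i, Finset.mem_singleton_self i, ?_⟩⟩
  obtain ⟨z, hz1, hz2⟩ := (mem_closure_iff.mp hy) (U i) (hU i) hi
  rwa [show z = y from hz2] at hz1

/-- `↑x` is saturated. -/
theorem upSet_sat {X : Type*} [TopologicalSpace X] (x : X) :
    SatUpper {y : X | SpecLE x y} :=
  fun _ hy _ hyz => specLE_trans' hy hyz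

/-- Key lemma: under the hypothesis `h`, every closed KF-set is itself directed. -/
theorem KF_closed_is_directed {X : Type*} [TopologicalSpace X] [T0Space X]
    (h : ∀ A : Set X, IsClosed A → IsKFSet A →
      ∀ K : Set X, IsCompact K → SatUpper K → IsClosed (SpecLower (K ∩ A)))
    (A : Set X) (hA : IsClosed A) (hKF : IsKFSet A) : DirectedSubset A := by
  obtain ⟨hne, 𝒦, h𝒦ne, hcs, hfil, hmeet, hmin⟩ := hKF
  have hclA : closure A = A := hA.closure_eq
  have hlowsub : ∀ K : Set X, SpecLower (K ∩ A) ⊆ A := by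
    rintro K x ⟨a, ⟨_, haA⟩, hxa⟩
    exact mem_closed_of_specLE hA haA hxa
  -- Step 1: for every `K ∈ 𝒦`, `↓(K ∩ A) = A`.
  have step1 : ∀ K ∈ 𝒦, SpecLower (K ∩ A) = A := by
    intro K hK
    have hc : IsClosed (SpecLower (K ∩ A)) :=
      h A hA ⟨hne, 𝒦, h𝒦ne, hcs, hfil, hmeet, hmin⟩ K (hcs K hK).1 (hcs K hK).2
    have heq : SpecLower (K ∩ A) = closure A := by
      apply hmin _ hc
      · rw [hclA]; exact hlowsub K
      · intro K' hK'
        obtain ⟨K₃, hK₃, hsub⟩ := hfil K hK K' hK'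
        obtain ⟨a, haA, haK₃⟩ := hmeet K₃ hK₃
        rw [hclA] at haA
        exact ⟨a, ⟨a, ⟨(hsub haK₃).1, haA⟩, specLE_refl' a⟩, (hsub haK₃).2⟩
    rw [heq, hclA]
  -- Step 2: for every `x ∈ A`, `↓(↑x ∩ A) = A`.
  have step2 : ∀ x ∈ A, SpecLower ({y | SpecLE x y} ∩ A) = A := by
    intro x hx
    have hc : IsClosed (SpecLower ({y | SpecLE x y} ∩ A)) :=
      h A hA ⟨hne, 𝒦, h𝒦ne, hcs, hfil, hmeet, hmin⟩ _ (upSet_compact x) (upSet_sat x)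
    have heq : SpecLower ({y | SpecLE x y} ∩ A) = closure A := by
      apply hmin _ hc
      · rw [hclA]; exact hlowsub _
      · intro K' hK'
        have hx' : x ∈ SpecLower (K' ∩ A) := by rw [step1 K' hK']; exact hx
        obtain ⟨a, ⟨haK', haA⟩, hxa⟩ := hx'
        exact ⟨a, ⟨a, ⟨hxa, haA⟩, specLE_refl' a⟩, haK'⟩
    rw [heq, hclA]
  -- Step 3: `A` is directed.
  refine ⟨hne, fun x hx y hy => ?_⟩
  have hy' : y ∈ SpecLower ({z | SpecLE x z} ∩ A) := by rw [step2 x hx]; exact hy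
  obtain ⟨z, ⟨hzx, hzA⟩, hyz⟩ := hy'
  exact ⟨z, hzA, hzx, hyz⟩

/-- The closure of a directed set is a KF-set (witnessed by `{↑d : d ∈ D}`). -/
theorem closure_directed_isKF {X : Type*} [TopologicalSpace X]
    {D : Set X} (hD : DirectedSubset D) : IsKFSet (closure D) := by
  obtain ⟨⟨d₀, hd₀⟩, hdir⟩ := hD
  refine ⟨⟨d₀, subset_closure hd₀⟩, (fun d => {y | SpecLE d y}) '' D,
    ⟨_, ⟨d₀, hd₀, rfl⟩⟩, ?_, ?_, ?_, ?_⟩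
  · rintro K ⟨d, _, rfl⟩
    exact ⟨upSet_compact d, upSet_sat d⟩
  · rintro K₁ ⟨d₁, hd₁, rfl⟩ K₂ ⟨d₂, hd₂, rfl⟩
    obtain ⟨d₃, hd₃, h13, h23⟩ := hdir d₁ hd₁ d₂ hd₂
    exact ⟨_, ⟨d₃, hd₃, rfl⟩,
      fun y hy => ⟨specLE_trans' h13 hy, specLE_trans' h23 hy⟩⟩
  · rintro K ⟨d, hd, rfl⟩
    exact ⟨d, subset_closure (subset_closure hd), specLE_refl' d⟩
  · intro C hC hsub hmeets
    have hDC : D ⊆ C := by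
      intro d hd
      obtain ⟨c, hcC, hcK⟩ := hmeets _ ⟨d, hd, rfl⟩
      exact mem_closed_of_specLE hC hcC hcK
    rw [closure_closure] at hsub ⊢
    exact subset_antisymm hsub (closure_minimal hDC hC)

/-- if `↓(K ∩ A)` is closed for every closed KF-set `A` and compact saturated
`K`, then (i) every closed KF-set is the closure of a directed set, and (ii) for every
nonempty family of closures of directed sets that is directed under inclusion, its union is
itself directed, and its closure is again the closure of a directed set. -/
theorem KF_closure_directed_and_directed_sups {X : Type*} [TopologicalSpace X] [T0Space X]
    (h : ∀ A : Set X, IsClosed A → IsKFSet A →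
      ∀ K : Set X, IsCompact K → SatUpper K → IsClosed (SpecLower (K ∩ A))) :
    (∀ A : Set X, IsClosed A → IsKFSet A → ∃ D : Set X, DirectedSubset D ∧ A = closure D) ∧
    (∀ (I : Type*) (f : I → Set X), Nonempty I →
      (∀ i : I, ∃ D : Set X, DirectedSubset D ∧ f i = closure D) →
      Directed (· ⊆ ·) f →
      DirectedSubset (⋃ i, f i) ∧
        ∃ D : Set X, DirectedSubset D ∧ closure (⋃ i, f i) = closure D) := by
  constructor
  · intro A hA hKF
    exact ⟨A, KF_closed_is_directed h A hA hKF, hA.closure_eq.symm⟩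
  · intro I f hI hf hdirf
    have hdirected : ∀ i, DirectedSubset (f i) := by
      intro i
      obtain ⟨D, hD, hfi⟩ := hf i
      have hcl : IsClosed (f i) := hfi ▸ isClosed_closure
      have hkf : IsKFSet (f i) := by rw [hfi]; exact closure_directed_isKF hD
      exact KF_closed_is_directed h (f i) hcl hkf
    have hne : (⋃ i, f i).Nonempty := by
      obtain ⟨i⟩ := hI
      obtain ⟨x, hx⟩ := (hdirected i).1
      exact ⟨x, Set.mem_iUnion.mpr ⟨i, hx⟩⟩
    have hdu : DirectedSubset (⋃ i, f i) := by
      refine ⟨hne, fun x hx y hy => ?_⟩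
      obtain ⟨i, hxi⟩ := Set.mem_iUnion.mp hx
      obtain ⟨j, hyj⟩ := Set.mem_iUnion.mp hy
      obtain ⟨k, hik, hjk⟩ := hdirf i j
      obtain ⟨z, hz, hxz, hyz⟩ := (hdirected k).2 x (hik hxi) y (hjk hyj)
      exact ⟨z, Set.mem_iUnion.mpr ⟨k, hz⟩, hxz, hyz⟩
    exact ⟨hdu, ⟨⋃ i, f i, hdu, rfl⟩⟩
end

section
/- Let X be a first countable T0 space. Then every irreducible closed subset of X is a well-filtered determined (WD) set (equivalently, the well-filterification of X coincides with the sobrification of X). -/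
/-- An irreducible closed set. -/
def IrredClosed {X : Type*} [TopologicalSpace X] (A : Set X) : Prop :=
  IsClosed A ∧ A.Nonempty ∧
    ∀ B C : Set X, IsClosed B → IsClosed C → A ⊆ B ∪ C → A ⊆ B ∨ A ⊆ C

/-- A well-filtered space: for every nonempty filtered family of compact saturated sets and
every open set containing its intersection, some member of the family is contained in the
open set. -/
def WellFiltered (Y : Type*) [TopologicalSpace Y] : Prop :=
  ∀ 𝒦 : Set (Set Y), 𝒦.Nonempty → (∀ K ∈ 𝒦, IsCompact K ∧ SatUpper K) → FilteredFam 𝒦 →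
    ∀ U : Set Y, IsOpen U → ⋂₀ 𝒦 ⊆ U → ∃ K ∈ 𝒦, K ⊆ U

/-- A well-filtered determined (WD) subset of `X`: every continuous map to a well-filtered
`T₀` space sends it to the closure of a unique point. -/
def IsWDSet {X : Type*} [TopologicalSpace X] (A : Set X) : Prop :=
  ∀ (Y : Type*) [TopologicalSpace Y] [T0Space Y], WellFiltered Y →
    ∀ f : X → Y, Continuous f → ∃ y : Y, closure (f '' A) = closure ({y} : Set Y)

/-!
Let `f : X → Y` be continuous, `Y` well-filtered and `A ⊆ X` irreducible. Using countable
neighbourhood bases and irreducibility, every countable `C ⊆ A` consists of limits of a sequence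
`z` in `A` that also converges to each of its own terms. Every tail of `f ∘ z` is then compact,
and well-filteredness applied to the saturations of the tails gives a generic point of
`cl (f '' range z)`. The generic points obtained in this way from countable subsets of `A` form a
directed set `D` with `cl D = cl (f '' A)`; well-filteredness applied to the saturations of the
points of `D` gives a point of `cl D` above all of `D`, i.e. a generic point of `cl (f '' A)`.
-/

open Filter Topology Set

theorem filteredFam_range_of_antitone {α : Type*} {K : ℕ → Set α} (hK : Antitone K) :
    FilteredFam (range K) := by
  rintro _ ⟨m, rfl⟩ _ ⟨n, rfl⟩
  exact ⟨K (max m n), mem_range_self _,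
    subset_inter (hK (le_max_left m n)) (hK (le_max_right m n))⟩

section WellFiltered

variable {Y : Type*} [TopologicalSpace Y]

theorem specLE_iff_specializes {x y : Y} : SpecLE x y ↔ y ⤳ x :=
  specializes_iff_mem_closure.symm

theorem satUpper_nhdsKer (s : Set Y) : SatUpper (nhdsKer s) := by
  intro x hx y hxy
  obtain ⟨z, hz, hxz⟩ := mem_nhdsKer_iff_specializes.mp hx
  exact mem_nhdsKer_iff_specializes.mpr ⟨z, hz, (specLE_iff_specializes.mp hxy).trans hxz⟩

theorem isCompact_nhdsKer_and_satUpper {s : Set Y} (hs : IsCompact s) :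
    IsCompact (nhdsKer s) ∧ SatUpper (nhdsKer s) :=
  ⟨IsCompact.nhdsKer_iff.mpr hs, satUpper_nhdsKer s⟩

theorem isGenericPoint_closure_of_mem_of_subset {y : Y} {S : Set Y} (hy : y ∈ closure S)
    (hS : S ⊆ closure {y}) : IsGenericPoint y (closure S) :=
  subset_antisymm (closure_minimal (singleton_subset_iff.2 hy) isClosed_closure)
    (closure_minimal hS isClosed_closure)

theorem WellFiltered.inter_sInter_nonempty (hY : WellFiltered Y) {𝒦 : Set (Set Y)}
    (hne : 𝒦.Nonempty) (h𝒦 : ∀ K ∈ 𝒦, IsCompact K ∧ SatUpper K) (hfil : FilteredFam 𝒦)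
    {E : Set Y} (hE : IsClosed E) (hmeet : ∀ K ∈ 𝒦, (E ∩ K).Nonempty) :
    (E ∩ ⋂₀ 𝒦).Nonempty := by
  by_contra hcon
  obtain ⟨K, hK, hKE⟩ :=
    hY 𝒦 hne h𝒦 hfil Eᶜ hE.isOpen_compl fun x hx hxE => hcon ⟨x, hxE, hx⟩
  obtain ⟨x, hxE, hxK⟩ := hmeet K hK
  exact hKE hxK hxE

theorem WellFiltered.exists_isGenericPoint_closure (hY : WellFiltered Y) {D : Set Y}
    (hD : DirectedSubset D) : ∃ y, IsGenericPoint y (closure D) := by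
  obtain ⟨hne, hdir⟩ := hD
  have hfil : FilteredFam ((fun d => nhdsKer {d}) '' D) := by
    rintro _ ⟨d₁, hd₁, rfl⟩ _ ⟨d₂, hd₂, rfl⟩
    obtain ⟨d, hd, h₁, h₂⟩ := hdir d₁ hd₁ d₂ hd₂
    exact ⟨nhdsKer {d}, mem_image_of_mem _ hd,
      subset_inter (specializes_iff_nhdsKer_subset.mp (specLE_iff_specializes.mp h₁))
        (specializes_iff_nhdsKer_subset.mp (specLE_iff_specializes.mp h₂))⟩
  obtain ⟨y, hyD, hyK⟩ := hY.inter_sInter_nonempty (hne.image _)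
    (forall_mem_image.2 fun _ _ => isCompact_nhdsKer_and_satUpper isCompact_singleton) hfil
    isClosed_closure (forall_mem_image.2 fun d hd => ⟨d, subset_closure hd, subset_nhdsKer rfl⟩)
  exact ⟨y, isGenericPoint_closure_of_mem_of_subset hyD fun d hd =>
    specializes_iff_mem_closure.mp (mem_nhdsKer_singleton.mp (hyK _ ⟨d, hd, rfl⟩))⟩

theorem WellFiltered.exists_isGenericPoint_closure_range (hY : WellFiltered Y) {w : ℕ → Y}
    (hw : ∀ j, Tendsto w atTop (𝓝 (w j))) : ∃ y, IsGenericPoint y (closure (range w)) := by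
  set K : ℕ → Set Y := fun m => nhdsKer (range fun k => w (k + m))
  have hK : ∀ m, IsCompact (K m) ∧ SatUpper (K m) := fun m => by
    refine isCompact_nhdsKer_and_satUpper ?_
    have h := ((hw m).comp (tendsto_add_atTop_nat m)).isCompact_insert_range
    rw [insert_eq_of_mem (mem_range.2 ⟨0, by simp⟩)] at h
    exact h
  have hanti : Antitone K := fun m n hmn => nhdsKer_mono <| by
    rintro _ ⟨k, rfl⟩
    exact ⟨k + (n - m), by simp only [add_assoc, Nat.sub_add_cancel hmn]⟩
  obtain ⟨y, hy, hyK⟩ := hY.inter_sInter_nonempty (range_nonempty K) (forall_mem_range.2 hK)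
    (filteredFam_range_of_antitone hanti) isClosed_closure <| forall_mem_range.2 fun m =>
      ⟨w m, subset_closure (mem_range_self m), subset_nhdsKer ⟨0, by simp⟩⟩
  have hfreq : ∃ᶠ n in atTop, w n ∈ closure {y} := by
    refine frequently_atTop.2 fun m => ?_
    obtain ⟨_, ⟨k, rfl⟩, hyk⟩ := mem_nhdsKer_iff_specializes.mp (hyK (K m) (mem_range_self m))
    exact ⟨k + m, le_add_self, specializes_iff_mem_closure.mp hyk⟩
  exact ⟨y, isGenericPoint_closure_of_mem_of_subset hy <| range_subset_iff.2 fun j =>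
    isClosed_closure.mem_of_frequently_of_tendsto hfreq (hw j)⟩

end WellFiltered

theorem Filter.HasAntitoneBasis.tendsto_of_eventually_mem {α : Type*} {l : Filter α}
    {u : ℕ → Set α} (hu : l.HasAntitoneBasis u) {z : ℕ → α} {k : ℕ → ℕ}
    (hk : Tendsto k atTop atTop) (h : ∀ᶠ n in atTop, z n ∈ u (k n)) : Tendsto z atTop l :=
  hu.toHasBasis.tendsto_right_iff.2 fun N _ =>
    (h.and (hk.eventually_ge_atTop N)).mono fun _ hn => hu.antitone hn.2 hn.1

section Irreducible

variable {X : Type*} [TopologicalSpace X]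

theorem IrredClosed.isIrreducible {A : Set X} (hA : IrredClosed A) : IsIrreducible A :=
  ⟨hA.2.1, isPreirreducible_iff_isClosed_union_isClosed.2 hA.2.2⟩

theorem IsIrreducible.inter_biInter_nhds_nonempty {A t : Set X} (hA : IsIrreducible A)
    (ht : t.Finite) (htA : t ⊆ A) {U : X → Set X} (hU : ∀ x ∈ t, U x ∈ 𝓝 x) :
    (A ∩ ⋂ x ∈ t, U x).Nonempty := by
  suffices (A ∩ ⋂ x ∈ t, interior (U x)).Nonempty from
    this.mono (inter_subset_inter_right _ (iInter₂_mono fun x _ => interior_subset))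
  induction t, ht using Set.Finite.induction_on with
  | empty => simpa using hA.nonempty
  | @insert a t _ ht ih =>
    rw [biInter_insert]
    refine hA.2 _ _ isOpen_interior (ht.isOpen_biInter fun _ _ => isOpen_interior)
      ⟨a, htA (mem_insert a t), mem_interior_iff_mem_nhds.2 (hU a (mem_insert a t))⟩
      (ih (fun x hx => htA (mem_insert_of_mem a hx)) fun x hx => hU x (mem_insert_of_mem a hx))

theorem IsIrreducible.exists_seq_tendsto_of_countable [FirstCountableTopology X] {A C : Set X}
    (hA : IsIrreducible A) (hCA : C ⊆ A) (hC : C.Countable) :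
    ∃ z : ℕ → X, (∀ n, z n ∈ A) ∧ (∀ x ∈ C, Tendsto z atTop (𝓝 x)) ∧
      ∀ j, Tendsto z atTop (𝓝 (z j)) := by
  obtain ⟨a, ha⟩ := hA.nonempty
  obtain ⟨s, hs⟩ := (hC.insert a).exists_eq_range (insert_nonempty a C)
  have hsA : ∀ i, s i ∈ A := fun i => insert_subset ha hCA (hs ▸ mem_range_self i)
  choose u hu using fun x : X => (𝓝 x).exists_antitone_basis
  -- `(N, x)` is a point `x ∈ A` chosen at stage `N`; it lies in the `N`-th basic neighbourhoods
  -- of `s 0, …, s N` and of every point chosen at an earlier stage.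
  obtain ⟨p, hpA, hpr⟩ := exists_seq_of_forall_finset_exists
    (fun p : ℕ × X => p.2 ∈ A ∧ ∀ i ≤ p.1, p.2 ∈ u (s i) p.1)
    (fun p q => p.1 < q.1 ∧ q.2 ∈ u p.2 q.1) fun S hS => by
      set N := S.sup Prod.fst + 1
      obtain ⟨x, hxA, hx⟩ := hA.inter_biInter_nhds_nonempty (U := fun x => u x N)
        (((finite_Iic N).image s).union (S.finite_toSet.image Prod.snd))
        (union_subset (image_subset_iff.2 fun i _ => hsA i)
          (image_subset_iff.2 fun q hq => (hS q hq).1)) fun x _ => (hu x).mem N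
      rw [mem_iInter₂] at hx
      exact ⟨(N, x), ⟨hxA, fun i hi => hx _ (Or.inl ⟨i, hi, rfl⟩)⟩,
        fun q hq => ⟨Nat.lt_succ_of_le (S.le_sup hq), hx _ (Or.inr ⟨q, hq, rfl⟩)⟩⟩
  have hk : Tendsto (fun n => (p n).1) atTop atTop :=
    StrictMono.tendsto_atTop fun m n h => (hpr m n h).1
  refine ⟨fun n => (p n).2, fun n => (hpA n).1, fun x hx => ?_, fun j => ?_⟩
  · obtain ⟨i, rfl⟩ : x ∈ range s := hs ▸ mem_insert_of_mem a hx
    exact (hu (s i)).tendsto_of_eventually_mem hk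
      ((hk.eventually_ge_atTop i).mono fun n hn => (hpA n).2 i hn)
  · exact (hu _).tendsto_of_eventually_mem hk
      ((eventually_gt_atTop j).mono fun n hn => (hpr j n hn).2)

end Irreducible

section GenericPoints

variable {X Y : Type*} [TopologicalSpace X] [TopologicalSpace Y]

def countableImageGenericPoints (f : X → Y) (A : Set X) : Set Y :=
  {y | ∃ C ⊆ A, C.Countable ∧ IsGenericPoint y (closure (f '' C))}

variable [FirstCountableTopology X] {f : X → Y} {A : Set X}

theorem exists_countable_superset_isGenericPoint (hY : WellFiltered Y) (hf : Continuous f)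
    (hA : IsIrreducible A) {C : Set X} (hCA : C ⊆ A) (hC : C.Countable) :
    ∃ C' ⊆ A, C'.Countable ∧ C ⊆ C' ∧ ∃ y, IsGenericPoint y (closure (f '' C')) := by
  obtain ⟨z, hzA, hzC, hzz⟩ := hA.exists_seq_tendsto_of_countable hCA hC
  have hfz : ∀ x, Tendsto z atTop (𝓝 x) → Tendsto (f ∘ z) atTop (𝓝 (f x)) :=
    fun x hx => (hf.tendsto x).comp hx
  obtain ⟨y, hy⟩ := hY.exists_isGenericPoint_closure_range fun j => hfz _ (hzz j)
  refine ⟨C ∪ range z, union_subset hCA (range_subset_iff.2 hzA), hC.union (countable_range z),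
    subset_union_left, y, ?_⟩
  have hC_lim : f '' C ⊆ closure (range (f ∘ z)) := image_subset_iff.2 fun x hx =>
    mem_closure_of_tendsto (hfz x (hzC x hx)) (Eventually.of_forall mem_range_self)
  rw [IsGenericPoint, hy, image_union, ← range_comp]
  exact subset_antisymm (closure_mono subset_union_right)
    (closure_minimal (union_subset hC_lim subset_closure) isClosed_closure)

theorem directedSubset_countableImageGenericPoints (hY : WellFiltered Y) (hf : Continuous f)
    (hA : IsIrreducible A) : DirectedSubset (countableImageGenericPoints f A) := by
  obtain ⟨a, ha⟩ := hA.nonempty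
  obtain ⟨C, hCA, hC, -, y, hy⟩ := exists_countable_superset_isGenericPoint hY hf hA
    (singleton_subset_iff.2 ha) (countable_singleton a)
  refine ⟨⟨y, C, hCA, hC, hy⟩, ?_⟩
  rintro y₁ ⟨C₁, hC₁A, hC₁, hy₁⟩ y₂ ⟨C₂, hC₂A, hC₂, hy₂⟩
  obtain ⟨C, hCA, hC, hsub, y, hy⟩ :=
    exists_countable_superset_isGenericPoint hY hf hA (union_subset hC₁A hC₂A) (hC₁.union hC₂)
  have hle : ∀ {C' : Set X} {y' : Y}, C' ⊆ C → IsGenericPoint y' (closure (f '' C')) →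
      SpecLE y' y := fun {_ y'} hC' hy' =>
    show y' ∈ closure {y} from hy.def ▸ closure_mono (image_mono hC') hy'.mem
  exact ⟨y, ⟨C, hCA, hC, hy⟩, hle (subset_union_left.trans hsub) hy₁,
    hle (subset_union_right.trans hsub) hy₂⟩

theorem closure_countableImageGenericPoints (hY : WellFiltered Y) (hf : Continuous f)
    (hA : IsIrreducible A) : closure (countableImageGenericPoints f A) = closure (f '' A) := by
  refine subset_antisymm (closure_minimal ?_ isClosed_closure) (closure_minimal ?_ isClosed_closure)
  · rintro y ⟨C, hCA, -, hy⟩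
    exact closure_mono (image_mono hCA) hy.mem
  · rintro _ ⟨a, ha, rfl⟩
    obtain ⟨C, hCA, hC, haC, y, hy⟩ := exists_countable_superset_isGenericPoint hY hf hA
      (singleton_subset_iff.2 ha) (countable_singleton a)
    have hyD : y ∈ countableImageGenericPoints f A := ⟨C, hCA, hC, hy⟩
    exact closure_minimal (singleton_subset_iff.2 (subset_closure hyD)) isClosed_closure
      (hy.def ▸ subset_closure (mem_image_of_mem f (haC rfl)))

end GenericPoints

theorem first_countable_irred_WD_general {X : Type*} [TopologicalSpace X]
    [FirstCountableTopology X] :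
    ∀ A : Set X, IrredClosed A → IsWDSet A := by
  intro A hA Y _ _ hY f hf
  obtain ⟨y, hy⟩ := hY.exists_isGenericPoint_closure
    (directedSubset_countableImageGenericPoints hY hf hA.isIrreducible)
  exact ⟨y, (closure_countableImageGenericPoints hY hf hA.isIrreducible).symm.trans hy.def.symm⟩

/-- in a first countable `T₀` space, every irreducible closed set is a
well-filtered determined set. -/
theorem first_countable_irred_WD {X : Type*} [TopologicalSpace X] [T0Space X]
    [FirstCountableTopology X] :
    ∀ A : Set X, IrredClosed A → IsWDSet A :=
  first_countable_irred_WD_general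
end

section
/- Let P be a poset and D a directed subset of P. Then the Scott-closure cl(D) of D is a pre-C-compact element of Γ(P). In particular, for every x ∈ P the principal ideal ↓x is pre-C-compact. -/
/-!
Let `𝒟 ∈ ℋ` with `cl D ⊆ ⋁ 𝒟`. The set `{x | ↓x ∈ 𝒟}` is Scott-closed: it is a lower set by (i),
and if `a` is the supremum of a directed set `E` in it, then `↓a` is the supremum in `Γ(P)` of the
directed family `{↓e | e ∈ E} ⊆ 𝒟`, so `↓a ∈ 𝒟` by (ii). It contains `⋃ 𝒟`, hence `⋁ 𝒟 ⊇ D`.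
So `{↓d | d ∈ D}` is a directed subfamily of `𝒟`, and its supremum `cl D` lies in `𝒟`.
-/

/-- A Scott-closed subset of a poset: a lower set closed under suprema of directed subsets
that exist. -/
def ScottClosed {P : Type*} [Preorder P] (A : Set P) : Prop :=
  IsLowerSet A ∧ ∀ D ⊆ A, D.Nonempty → DirectedOn (· ≤ ·) D →
    ∀ a : P, IsLUB D a → a ∈ A

/-- The Scott closure: the intersection of all Scott-closed supersets. -/
def scottClosure {P : Type*} [Preorder P] (A : Set P) : Set P :=
  ⋂₀ {C : Set P | ScottClosed C ∧ A ⊆ C}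

/-- The supremum of a family of sets in the complete lattice `Γ(P)` of Scott-closed sets:
the Scott closure of its union. -/
def GammaSup {P : Type*} [Preorder P] (𝒞 : Set (Set P)) : Set P :=
  scottClosure (⋃₀ 𝒞)

/-- `𝒟 ∈ ℋ`: `𝒟` is a family of nonempty Scott-closed sets such that `↓a ∈ 𝒟` whenever
`a ∈ A ∈ 𝒟`, and `𝒟` is d-closed: the supremum in `Γ(P)` of any nonempty directed (under
inclusion) subfamily of `𝒟` belongs to `𝒟`. -/
def MemH {P : Type*} [Preorder P] (𝒟 : Set (Set P)) : Prop :=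
  (∀ A ∈ 𝒟, ScottClosed A ∧ A.Nonempty) ∧
  (∀ A ∈ 𝒟, ∀ a ∈ A, Set.Iic a ∈ 𝒟) ∧
  (∀ 𝒞 ⊆ 𝒟, 𝒞.Nonempty → DirectedOn (· ⊆ ·) 𝒞 → GammaSup 𝒞 ∈ 𝒟)

/-- `A` is beneath `B` (`A ≺ B`): for every `𝒟 ∈ ℋ` with `B` contained in the supremum of
`𝒟` in `Γ(P)`, one has `A ∈ 𝒟`. -/
def Beneath {P : Type*} [Preorder P] (A B : Set P) : Prop :=
  ∀ 𝒟 : Set (Set P), MemH 𝒟 → B ⊆ GammaSup 𝒟 → A ∈ 𝒟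

/-- A pre-C-compact element of `Γ(P)`: a Scott-closed set `A` with `A ≺ A`. -/
def PreCCompact {P : Type*} [Preorder P] (A : Set P) : Prop :=
  ScottClosed A ∧ Beneath A A

section ScottClosure

variable {P : Type*} [Preorder P]

lemma scottClosed_Iic (a : P) : ScottClosed (Set.Iic a) :=
  ⟨isLowerSet_Iic a, fun _ hD _ _ _ hb => hb.2 fun _ hd => hD hd⟩

lemma subset_scottClosure (A : Set P) : A ⊆ scottClosure A :=
  fun _ hx => Set.mem_sInter.2 fun _ hC => hC.2 hx

lemma scottClosure_minimal {A C : Set P} (hC : ScottClosed C) (h : A ⊆ C) :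
    scottClosure A ⊆ C :=
  fun _ hx => Set.mem_sInter.1 hx C ⟨hC, h⟩

lemma scottClosed_scottClosure (A : Set P) : ScottClosed (scottClosure A) := by
  refine ⟨fun x y hxy hx => Set.mem_sInter.2 fun C hC => hC.1.1 hxy (Set.mem_sInter.1 hx C hC),
    fun D hD hne hdir a ha => Set.mem_sInter.2 fun C hC => ?_⟩
  exact hC.1.2 D (fun d hd => Set.mem_sInter.1 (hD hd) C hC) hne hdir a ha

lemma scottClosure_eq_Iic_of_isLUB {D : Set P} (hne : D.Nonempty)
    (hdir : DirectedOn (· ≤ ·) D) {a : P} (ha : IsLUB D a) :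
    scottClosure D = Set.Iic a := by
  refine subset_antisymm (scottClosure_minimal (scottClosed_Iic a) ha.1) fun x hx => ?_
  have ha_mem : a ∈ scottClosure D :=
    (scottClosed_scottClosure D).2 D (subset_scottClosure D) hne hdir a ha
  exact (scottClosed_scottClosure D).1 hx ha_mem

lemma scottClosure_singleton (x : P) : scottClosure {x} = Set.Iic x :=
  scottClosure_eq_Iic_of_isLUB (Set.singleton_nonempty x) (directedOn_singleton x) isLUB_singleton

lemma directedOn_image_Iic {D : Set P} (hdir : DirectedOn (· ≤ ·) D) :
    DirectedOn (· ⊆ ·) (Set.Iic '' D) := by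
  rintro _ ⟨d₁, hd₁, rfl⟩ _ ⟨d₂, hd₂, rfl⟩
  obtain ⟨d, hd, h₁, h₂⟩ := hdir d₁ hd₁ d₂ hd₂
  exact ⟨Set.Iic d, ⟨d, hd, rfl⟩, Set.Iic_subset_Iic.2 h₁, Set.Iic_subset_Iic.2 h₂⟩

lemma gammaSup_image_Iic (D : Set P) : GammaSup (Set.Iic '' D) = scottClosure D := by
  refine subset_antisymm (scottClosure_minimal (scottClosed_scottClosure D) ?_)
    (scottClosure_minimal (scottClosed_scottClosure _) fun d hd =>
      subset_scottClosure _ ⟨Set.Iic d, ⟨d, hd, rfl⟩, le_refl d⟩)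
  rintro x ⟨_, ⟨d, hd, rfl⟩, hx⟩
  exact (scottClosed_scottClosure D).1 hx (subset_scottClosure D hd)

end ScottClosure

namespace MemH

variable {P : Type*} [Preorder P] {𝒟 : Set (Set P)}

lemma scottClosure_mem (h𝒟 : MemH 𝒟) {D : Set P} (hne : D.Nonempty)
    (hdir : DirectedOn (· ≤ ·) D) (hD : ∀ d ∈ D, Set.Iic d ∈ 𝒟) : scottClosure D ∈ 𝒟 := by
  have hsub : Set.Iic '' D ⊆ 𝒟 := by
    rintro _ ⟨d, hd, rfl⟩
    exact hD d hd
  simpa only [gammaSup_image_Iic] using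
    h𝒟.2.2 _ hsub (hne.image _) (directedOn_image_Iic hdir)

lemma scottClosed_setOf_Iic_mem (h𝒟 : MemH 𝒟) : ScottClosed {x | Set.Iic x ∈ 𝒟} := by
  refine ⟨fun x y hxy hx => h𝒟.2.1 _ hx y hxy, fun D hD hne hdir a ha => ?_⟩
  change Set.Iic a ∈ 𝒟
  rw [← scottClosure_eq_Iic_of_isLUB hne hdir ha]
  exact h𝒟.scottClosure_mem hne hdir hD

lemma Iic_mem_of_mem_gammaSup (h𝒟 : MemH 𝒟) {x : P} (hx : x ∈ GammaSup 𝒟) :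
    Set.Iic x ∈ 𝒟 := by
  refine scottClosure_minimal h𝒟.scottClosed_setOf_Iic_mem ?_ hx
  rintro y ⟨A, hA, hy⟩
  exact h𝒟.2.1 A hA y hy

end MemH

lemma beneath_scottClosure_self {P : Type*} [Preorder P] {D : Set P} (hne : D.Nonempty)
    (hdir : DirectedOn (· ≤ ·) D) : Beneath (scottClosure D) (scottClosure D) :=
  fun _ h𝒟 hsub => h𝒟.scottClosure_mem hne hdir fun _ hd =>
    h𝒟.Iic_mem_of_mem_gammaSup (hsub (subset_scottClosure D hd))

lemma preCCompact_scottClosure {P : Type*} [Preorder P] {D : Set P} (hne : D.Nonempty)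
    (hdir : DirectedOn (· ≤ ·) D) : PreCCompact (scottClosure D) :=
  ⟨scottClosed_scottClosure D, beneath_scottClosure_self hne hdir⟩

/-- the Scott closure of a directed set is pre-C-compact; in particular every
principal ideal `↓x` is pre-C-compact. -/
theorem scottClosure_directed_preCCompact {P : Type*} [PartialOrder P] :
    (∀ D : Set P, D.Nonempty → DirectedOn (· ≤ ·) D → PreCCompact (scottClosure D)) ∧
    (∀ x : P, PreCCompact (Set.Iic x)) := by
  refine ⟨fun D hne hdir => preCCompact_scottClosure hne hdir, fun x => ?_⟩
  rw [← scottClosure_singleton]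
  exact preCCompact_scottClosure (Set.singleton_nonempty x) (directedOn_singleton x)
end
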